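/- arXiv:1507.00798 — 3 statements merged into one kernel-verified Lean document; each statement's English description precedes it below -/
import Mathlib

section
/- Let μ be a measure on a space X and let u, v : X → ℝ be square-integrable functions. Then √(∫ (1-u)² dμ) + √(∫ (1-v)²·u² dμ) ≥ √(∫ (1 - u·v)² dμ). -/
/-!
With `f = 1 - u` and `g = u - u v = (1 - v) u` we have `f + g = 1 - u v`, so the inequality is
Minkowski's inequality `‖f + g‖₂ ≤ ‖f‖₂ + ‖g‖₂`, once `√(∫ h²)` is identified with the `L²` norm.
-/

open MeasureTheory

section

variable {α : Type*} [MeasurableSpace α] {μ : Measure α}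

/-- Both sides vanish when `f ∉ L²`: the integral by convention, the norm as `(∞).toReal`. -/
theorem sqrt_integral_sq_eq_toReal_eLpNorm {f : α → ℝ} (hf : AEStronglyMeasurable f μ) :
    √(∫ x, f x ^ 2 ∂μ) = (eLpNorm f 2 μ).toReal := by
  by_cases hf₂ : MemLp f 2 μ
  · rw [hf₂.eLpNorm_eq_integral_rpow_norm two_ne_zero ENNReal.ofNat_ne_top,
      ENNReal.toReal_ofReal (by positivity), Real.sqrt_eq_rpow]
    norm_num
  · have h_not_int : ¬Integrable (fun x => f x ^ 2) μ :=
      (memLp_two_iff_integrable_sq hf).not.mp hf₂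
    have h_top : eLpNorm f 2 μ = ⊤ := by
      by_contra h
      exact hf₂ ⟨hf, lt_top_iff_ne_top.mpr h⟩
    rw [integral_undef h_not_int, h_top, Real.sqrt_zero, ENNReal.toReal_top]

theorem sqrt_integral_add_sq_le {f g : α → ℝ} (hf : AEStronglyMeasurable f μ)
    (hg : MemLp g 2 μ) :
    √(∫ x, (f x + g x) ^ 2 ∂μ) ≤ √(∫ x, f x ^ 2 ∂μ) + √(∫ x, g x ^ 2 ∂μ) := by
  rw [sqrt_integral_sq_eq_toReal_eLpNorm hf, sqrt_integral_sq_eq_toReal_eLpNorm hg.1,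
    sqrt_integral_sq_eq_toReal_eLpNorm (f := fun x => f x + g x) (hf.add hg.1)]
  refine (ENNReal.toReal_mono' (eLpNorm_add_le hf hg.1 one_le_two) fun h_sum_top => ?_).trans
    ENNReal.toReal_add_le
  have hf_top : eLpNorm f 2 μ = ⊤ := by
    simpa [ENNReal.add_eq_top, hg.eLpNorm_ne_top] using h_sum_top
  by_contra hfg_ne_top
  have hfg : MemLp (f + g) 2 μ := ⟨hf.add hg.1, lt_top_iff_ne_top.mpr hfg_ne_top⟩
  have hf₂ : MemLp f 2 μ := by simpa using hfg.sub hg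
  exact hf₂.eLpNorm_ne_top hf_top

end

theorem elastic_energy_triangle_general
    {X : Type*} [MeasurableSpace X] (μ : Measure X) (u v : X → ℝ)
    (hu : MemLp u 2 μ)
    (huv : MemLp (fun x => u x * v x) 2 μ) :
    Real.sqrt (∫ x, (1 - u x) ^ 2 ∂μ) + Real.sqrt (∫ x, (1 - v x) ^ 2 * (u x) ^ 2 ∂μ)
      ≥ Real.sqrt (∫ x, (1 - u x * v x) ^ 2 ∂μ) := by
  have key := sqrt_integral_add_sq_le (f := fun x => 1 - u x) (g := fun x => u x - u x * v x)
    (aestronglyMeasurable_const.sub hu.1) (hu.sub huv)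
  convert key using 5 <;> ring

/-- Measure-theoretic triangle inequality for the elastic energy:
`√(∫ (1-u)²) + √(∫ (1-v)²u²) ≥ √(∫ (1-uv)²)` for square-integrable `u, v`. -/
theorem elastic_energy_triangle
    {X : Type*} [MeasurableSpace X] (μ : Measure X) (u v : X → ℝ)
    (hu : MemLp u 2 μ) (hv : MemLp v 2 μ)
    (huv : MemLp (fun x => u x * v x) 2 μ) :
    Real.sqrt (∫ x, (1 - u x) ^ 2 ∂μ) + Real.sqrt (∫ x, (1 - v x) ^ 2 * (u x) ^ 2 ∂μ)
      ≥ Real.sqrt (∫ x, (1 - u x * v x) ^ 2 ∂μ) :=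
  elastic_energy_triangle_general μ u v hu huv
end

section
/- For the Möbius transformation m(z) = Az with |A| > 1, the average stretching satisfies E_1(m) = ∫_ℂ λ_m dA₁ = 8π|A|log|A|/(|A|² − 1), where dA₁ = 4/(1+|z|²)² dA is the spherical area element. In particular, E_1(m) → 0 as |A| → ∞. -/
/-!
The integrand depends only on `r = |z|`, so polar coordinates turn `E_1(m)` into
`2π ∫₀^∞ 4ar / ((1 + a²r²)(1 + r²)) dr` with `a = |A|`. By partial fractions this has the
antiderivative `2a/(a² - 1) · log ((1 + a²r²)/(1 + r²))`, which vanishes at `0` and tends to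
`2a/(a² - 1) · log a²` at infinity. The limit `|A| → ∞` follows from `log t / t → 0`.
-/

open Filter MeasureTheory Set Real Topology

theorem Complex.integral_fun_norm {F : Type*} [NormedAddCommGroup F] [NormedSpace ℝ F]
    (f : ℝ → F) : ∫ z : ℂ, f ‖z‖ = (2 * π) • ∫ r in Ioi (0 : ℝ), r • f r := by
  rw [integral_fun_norm_addHaar volume f, Complex.finrank_real_complex, measureReal_def,
    Complex.volume_ball, ← Nat.cast_smul_eq_nsmul ℝ, smul_smul]
  norm_num

theorem tendsto_log_one_add_mul_sq_sub_log_one_add_sq {a : ℝ} (ha : a ≠ 0) :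
    Tendsto (fun r : ℝ => log (1 + a ^ 2 * r ^ 2) - log (1 + r ^ 2)) atTop
      (𝓝 (log (a ^ 2))) := by
  have hinv : Tendsto (fun r : ℝ => (1 + r ^ 2)⁻¹) atTop (𝓝 0) :=
    tendsto_inv_atTop_zero.comp <| tendsto_atTop_add_const_left _ _ <|
      tendsto_pow_atTop two_ne_zero
  have hratio :
      Tendsto (fun r : ℝ => (1 + a ^ 2 * r ^ 2) / (1 + r ^ 2)) atTop (𝓝 (a ^ 2)) := by
    have := (hinv.const_mul (1 - a ^ 2)).const_add (a ^ 2)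
    rw [mul_zero, add_zero] at this
    refine this.congr fun r => ?_
    field_simp
    ring
  refine ((continuousAt_log (pow_ne_zero 2 ha)).tendsto.comp hratio).congr fun r => ?_
  exact log_div (by positivity) (by positivity)

theorem hasDerivAt_log_one_add_mul_sq_sub_log_one_add_sq (a r : ℝ) :
    HasDerivAt (fun r : ℝ => log (1 + a ^ 2 * r ^ 2) - log (1 + r ^ 2))
      (2 * (a ^ 2 - 1) * r / ((1 + a ^ 2 * r ^ 2) * (1 + r ^ 2))) r := by
  have h₁ : HasDerivAt (fun r : ℝ => 1 + a ^ 2 * r ^ 2) (a ^ 2 * (2 * r)) r := by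
    simpa using ((hasDerivAt_pow 2 r).const_mul (a ^ 2)).const_add 1
  have h₂ : HasDerivAt (fun r : ℝ => 1 + r ^ 2) (2 * r) r := by
    simpa using (hasDerivAt_pow 2 r).const_add 1
  have hpos₁ : 0 < 1 + a ^ 2 * r ^ 2 := by positivity
  have hpos₂ : 0 < 1 + r ^ 2 := by positivity
  refine ((h₁.log hpos₁.ne').sub (h₂.log hpos₂.ne')).congr_deriv ?_
  field_simp
  ring

/-- `λ_m(z)` for `m(z) = a z`, as a function of `r = |z|`. -/
noncomputable def scalingDilation (a r : ℝ) : ℝ := a * (1 + r ^ 2) / (1 + a ^ 2 * r ^ 2)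

noncomputable def sphericalAreaDensity (r : ℝ) : ℝ := 4 / (1 + r ^ 2) ^ 2

theorem integral_Ioi_mul_scalingDilation_mul_sphericalAreaDensity {a : ℝ} (ha₀ : 0 < a)
    (ha₁ : a ≠ 1) :
    ∫ r in Ioi (0 : ℝ), r * (scalingDilation a r * sphericalAreaDensity r)
      = 4 * a * log a / (a ^ 2 - 1) := by
  have hsq : a ^ 2 - 1 ≠ 0 := by
    rw [show a ^ 2 - 1 = (a - 1) * (a + 1) by ring]
    exact mul_ne_zero (sub_ne_zero.2 ha₁) (by positivity)
  set c := 2 * a / (a ^ 2 - 1)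
  have hderiv : ∀ r, HasDerivAt (fun r : ℝ => c * (log (1 + a ^ 2 * r ^ 2) - log (1 + r ^ 2)))
      (r * (scalingDilation a r * sphericalAreaDensity r)) r := by
    intro r
    refine ((hasDerivAt_log_one_add_mul_sq_sub_log_one_add_sq a r).const_mul c).congr_deriv ?_
    have : 0 < 1 + a ^ 2 * r ^ 2 := by positivity
    have : 0 < 1 + r ^ 2 := by positivity
    simp only [c, scalingDilation, sphericalAreaDensity]
    field_simp
    ring
  rw [integral_Ioi_of_hasDerivAt_of_nonneg (hderiv 0).continuousAt.continuousWithinAt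
    (fun r _ => hderiv r) (fun r (hr : 0 < r) => by
      unfold scalingDilation sphericalAreaDensity; positivity)
    ((tendsto_log_one_add_mul_sq_sub_log_one_add_sq ha₀.ne').const_mul c)]
  norm_num [c]
  field_simp
  ring

theorem tendsto_mul_log_div_sq_sub_one_atTop_zero :
    Tendsto (fun t : ℝ => t * log t / (t ^ 2 - 1)) atTop (𝓝 0) := by
  have hratio : Tendsto (fun t : ℝ => t ^ 2 / (t ^ 2 - 1)) atTop (𝓝 1) := by
    have hinv : Tendsto (fun t : ℝ => (t ^ 2 - 1)⁻¹) atTop (𝓝 0) :=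
      tendsto_inv_atTop_zero.comp <| tendsto_atTop_add_const_right _ _ <|
        tendsto_pow_atTop two_ne_zero
    have := hinv.const_add 1
    rw [add_zero] at this
    refine this.congr' ?_
    filter_upwards [eventually_gt_atTop 1] with t ht
    have : t ^ 2 - 1 ≠ 0 := by nlinarith
    field_simp
    ring
  have := isLittleO_log_id_atTop.tendsto_div_nhds_zero.mul hratio
  rw [zero_mul] at this
  refine this.congr' ?_
  filter_upwards [eventually_gt_atTop 1] with t ht
  have : t ^ 2 - 1 ≠ 0 := by nlinarith
  have : t ≠ 0 := by positivity
  simp only [id]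
  field_simp

/-- For `m(z) = Az` with `|A| > 1`, the average stretching
`E_1(m) = ∫_ℂ λ_m · 4/(1+|z|²)² dA` equals `8π|A|log|A|/(|A|²-1)`, and this
quantity tends to `0` as `|A| → ∞`. -/
theorem average_stretching_of_hyperbolic (A : ℂ) (hA : 1 < ‖A‖) :
    (∫ z : ℂ,
        (‖A‖ * (1 + ‖z‖ ^ 2)
            / (1 + ‖A‖ ^ 2 * ‖z‖ ^ 2))
          * (4 / (1 + ‖z‖ ^ 2) ^ 2)
      = 8 * Real.pi * ‖A‖ * Real.log (‖A‖)
          / (‖A‖ ^ 2 - 1)) ∧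
    Tendsto (fun t : ℝ => 8 * Real.pi * t * Real.log t / (t ^ 2 - 1))
      atTop (nhds 0) := by
  have hpolar := Complex.integral_fun_norm fun r =>
    scalingDilation ‖A‖ r * sphericalAreaDensity r
  simp only [smul_eq_mul] at hpolar
  refine ⟨hpolar.trans ?_, ?_⟩
  · rw [integral_Ioi_mul_scalingDilation_mul_sphericalAreaDensity (by linarith) hA.ne']
    ring
  · simpa only [mul_zero, mul_assoc, mul_div_assoc] using
      tendsto_mul_log_div_sq_sub_one_atTop_zero.const_mul (8 * π)
end

section
/- Let A, B ∈ ℂ with |A| ≥ 1, B real and positive. Let D₁ = D(−B/A, B/(2|A|)) and D₂ = D(0, B/(2|A|)). Then every z ∈ ℂ \ (D₁ ∪ D₂) satisfies both |Az + B| ≥ B/2 and |Az + B| ≥ |z|/3. -/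
/-! Writing `A z + B = A (z + B/A)` shows that `|Az + B|` is `|A|` times the distance from `z`
to the centre `-B/A` of `D₁`, hence at least `B/2` off `D₁`. Then
`|z| ≤ |A| |z| ≤ |Az + B| + B ≤ 3 |Az + B|`. -/

section NormedField

variable {𝕜 : Type*} [NormedField 𝕜]

theorem norm_mul_add_eq_norm_mul_dist {a : 𝕜} (ha : a ≠ 0) (b z : 𝕜) :
    ‖a * z + b‖ = ‖a‖ * dist z (-b / a) := by
  rw [dist_eq_norm, ← norm_mul]
  congr 1
  field_simp
  ring

theorem le_norm_mul_add_of_div_le_dist {a : 𝕜} (ha : a ≠ 0) {b z : 𝕜} {r : ℝ}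
    (h : r / ‖a‖ ≤ dist z (-b / a)) : r ≤ ‖a * z + b‖ := by
  rw [norm_mul_add_eq_norm_mul_dist ha, ← div_le_iff₀' (norm_pos_iff.mpr ha)]
  exact h

theorem norm_le_three_mul_norm_mul_add {a b z : 𝕜} (ha : 1 ≤ ‖a‖)
    (hb : ‖b‖ ≤ 2 * ‖a * z + b‖) : ‖z‖ ≤ 3 * ‖a * z + b‖ :=
  calc ‖z‖ ≤ ‖a‖ * ‖z‖ := le_mul_of_one_le_left (norm_nonneg z) ha
    _ = ‖(a * z + b) - b‖ := by rw [add_sub_cancel_right, norm_mul]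
    _ ≤ ‖a * z + b‖ + ‖b‖ := norm_sub_le _ _
    _ ≤ 3 * ‖a * z + b‖ := by linarith

end NormedField

/-- Case (3) claim: with `|A| ≥ 1`, `B > 0`, `D₁ = D(-B/A, B/(2|A|))`,
`D₂ = D(0, B/(2|A|))`, every `z ∈ ℂ \ (D₁ ∪ D₂)` satisfies both
`|Az + B| ≥ B/2` and `|Az + B| ≥ |z|/3`. -/
theorem outside_disks_bound_case3 (A : ℂ) (B : ℝ)
    (hA : 1 ≤ ‖A‖) (hB : 0 < B) (z : ℂ)
    (hz : z ∉ Metric.ball (-(B : ℂ) / A) (B / (2 * ‖A‖))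
            ∪ Metric.ball (0 : ℂ) (B / (2 * ‖A‖))) :
    ‖A * z + (B : ℂ)‖ ≥ B / 2 ∧
    ‖A * z + (B : ℂ)‖ ≥ ‖z‖ / 3 := by
  obtain ⟨hz₁, -⟩ := not_or.mp hz
  have hA₀ : A ≠ 0 := norm_pos_iff.mp (by linarith)
  have hhalf : B / 2 ≤ ‖A * z + B‖ :=
    le_norm_mul_add_of_div_le_dist hA₀ (by rw [div_div]; exact not_lt.mp hz₁)
  have hthird : ‖z‖ ≤ 3 * ‖A * z + B‖ :=
    norm_le_three_mul_norm_mul_add hA <| by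
      rw [Complex.norm_real, Real.norm_of_nonneg hB.le]
      linarith
  exact ⟨hhalf, by linarith⟩
end
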